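/- arXiv:1706.05439 — 3 statements merged into one kernel-verified Lean document; each statement's English description precedes it below -/
import Mathlib

section
/- Let A, B, C be non-negative real numbers with A ∈ (0,1), and let (x_k)_{k≥0} be a sequence of non-negative reals satisfying x_{k+1}² ≤ ((1-A)x_k + C)² + B² for every integer k ≥ 0. Then for all integers k ≥ 0, x_k ≤ (1-A)^k x_0 + C/A + B²/(C + √A · B). -/
/-!
Put `D = C/A + B²/(C + √A·B)` and `E = A·B²/(C + √A·B)`, so that `(1-A)D + C = D - E`.
The identity `2DE - E² - B² = B²(C² + A(1-A)B²)/(C + √A·B)²` gives `B² ≤ 2DE - E²`, hence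
`u² + B² ≤ (u + E)²` for every `u ≥ D - E`. Consequently `x_k ≤ D + s` with `s ≥ 0` forces
`x_{k+1} ≤ D + (1-A)s`, and the excess of `x_k` over `D` decays geometrically.
-/

theorem le_pow_mul_add_of_step {x : ℕ → ℝ} {q D : ℝ} (hq : 0 ≤ q) (hD : 0 ≤ D)
    (hx0 : 0 ≤ x 0) (hstep : ∀ k s, 0 ≤ s → x k ≤ s + D → x (k + 1) ≤ q * s + D) (k : ℕ) :
    x k ≤ q ^ k * x 0 + D := by
  induction k with
  | zero => simpa using hD
  | succ k ih =>
    rw [pow_succ', mul_assoc]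
    exact hstep k _ (by positivity) ih

namespace Dalalyan

noncomputable def bound (A B C : ℝ) : ℝ := C / A + B ^ 2 / (C + √A * B)

noncomputable def slack (A B C : ℝ) : ℝ := A * B ^ 2 / (C + √A * B)

variable {A B C : ℝ}

theorem bound_nonneg (hA : 0 ≤ A) (hB : 0 ≤ B) (hC : 0 ≤ C) : 0 ≤ bound A B C := by
  unfold bound; positivity

theorem slack_nonneg (hA : 0 ≤ A) (hB : 0 ≤ B) (hC : 0 ≤ C) : 0 ≤ slack A B C := by
  unfold slack; positivity

theorem mul_bound (hA : 0 < A) : A * bound A B C = C + slack A B C := by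
  unfold bound slack
  rw [mul_add, mul_div_cancel₀ C hA.ne', mul_div_assoc]

theorem sq_add_sq_slack_le (hA : A ∈ Set.Ioo (0 : ℝ) 1) (hB : 0 ≤ B) (hC : 0 ≤ C) :
    B ^ 2 + slack A B C ^ 2 ≤ 2 * bound A B C * slack A B C := by
  obtain ⟨hA0, hA1⟩ := hA
  rcases hB.eq_or_lt with rfl | hB0
  · simp [slack]
  have hs : 0 < C + √A * B := by positivity
  have hsqrt : √A ^ 2 = A := Real.sq_sqrt hA0.le
  have key : 2 * bound A B C * slack A B C - slack A B C ^ 2 - B ^ 2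
      = B ^ 2 * (C ^ 2 + A * (1 - A) * B ^ 2) / (C + √A * B) ^ 2 := by
    unfold bound slack
    field_simp
    linear_combination -B ^ 2 * hsqrt
  have : 0 ≤ B ^ 2 * (C ^ 2 + A * (1 - A) * B ^ 2) / (C + √A * B) ^ 2 := by
    have : 0 ≤ 1 - A := by linarith
    positivity
  linarith

theorem step_sq_le (hA : A ∈ Set.Ioo (0 : ℝ) 1) (hB : 0 ≤ B) (hC : 0 ≤ C) {s : ℝ} (hs : 0 ≤ s) :
    ((1 - A) * (s + bound A B C) + C) ^ 2 + B ^ 2 ≤ ((1 - A) * s + bound A B C) ^ 2 := by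
  have hfix : (1 - A) * (s + bound A B C) + C = (1 - A) * s + bound A B C - slack A B C := by
    linear_combination -mul_bound (B := B) (C := C) hA.1
  have hE := slack_nonneg hA.1.le hB hC
  have hsE : 0 ≤ (1 - A) * s * slack A B C := mul_nonneg (mul_nonneg (by linarith [hA.2]) hs) hE
  rw [hfix]
  nlinarith [sq_add_sq_slack_le hA hB hC]

theorem succ_le_of_le_add_bound (hA : A ∈ Set.Ioo (0 : ℝ) 1) (hB : 0 ≤ B) (hC : 0 ≤ C)
    {y z s : ℝ} (hy : 0 ≤ y) (hs : 0 ≤ s) (hys : y ≤ s + bound A B C)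
    (hz : z ^ 2 ≤ ((1 - A) * y + C) ^ 2 + B ^ 2) :
    z ≤ (1 - A) * s + bound A B C := by
  have h1A : 0 ≤ 1 - A := by linarith [hA.2]
  have hmono : ((1 - A) * y + C) ^ 2 ≤ ((1 - A) * (s + bound A B C) + C) ^ 2 := by
    gcongr
  have hrhs : 0 ≤ (1 - A) * s + bound A B C := by
    have := bound_nonneg hA.1.le hB hC
    positivity
  exact (le_abs_self z).trans <|
    abs_le_of_sq_le_sq (by linarith [step_sq_le hA hB hC hs]) hrhs

end Dalalyan

open Dalalyan in
/-- Dalalyan's recursion lemma: if x_{k+1}² ≤ ((1-A)x_k + C)² + B², then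
x_k ≤ (1-A)^k x_0 + C/A + B²/(C + √A·B). -/
theorem stmt1 (A B C : ℝ) (hA : A ∈ Set.Ioo (0 : ℝ) 1) (hB : 0 ≤ B) (hC : 0 ≤ C)
    (x : ℕ → ℝ) (hx : ∀ k, 0 ≤ x k)
    (hrec : ∀ k : ℕ, (x (k + 1)) ^ 2 ≤ ((1 - A) * x k + C) ^ 2 + B ^ 2) :
    ∀ k : ℕ, x k ≤ (1 - A) ^ k * x 0 + C / A + B ^ 2 / (C + Real.sqrt A * B) := by
  intro k
  rw [add_assoc]
  exact le_pow_mul_add_of_step (by linarith [hA.2]) (bound_nonneg hA.1.le hB hC) (hx 0)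
    (fun k _ hs hk => succ_le_of_le_add_bound hA hB hC (hx k) hs hk (hrec k)) k
end

section
/- Under the Lipschitz assumption on each ∇f_i, the control-variate gradient noise ξ := ∇f̃(θ) - ∇f(θ) with sampling probabilities p_i = L_i / Σ_j L_j satisfies E‖ξ‖² ≤ (Σ_{i=1}^N L_i)² / n · ‖θ - θ̂‖² for every fixed θ, θ̂ ∈ R^d. -/
open MeasureTheory ProbabilityTheory

/-!
Write pᵢ = Lᵢ/Λ with Λ = Σⱼ Lⱼ, vᵢ = ∇fᵢ(θ) - ∇fᵢ(θ̂), cᵢ = pᵢ⁻¹ vᵢ and m = Σᵢ pᵢ cᵢ = Σᵢ vᵢ.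
The f₀ terms cancel and the noise is n⁻¹ Σₖ (c_{Sₖ} - m), an average of n independent centred
copies of c_{S₁} - m, so E‖ξ‖² = n⁻¹ (Σᵢ pᵢ‖cᵢ‖² - ‖m‖²). Sampling proportionally to Lᵢ is what
makes pᵢ‖cᵢ‖² = ‖vᵢ‖²/pᵢ ≤ Λ Lᵢ ‖θ - θ̂‖², which sums to Λ² ‖θ - θ̂‖².
-/

theorem sum_mul_norm_inv_smul_sq_le {ι E : Type*} [Fintype ι] [SeminormedAddCommGroup E]
    [NormedSpace ℝ E] {L : ι → ℝ} (hL : ∀ i, 0 < L i) {v : ι → E} {D : ℝ}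
    (hv : ∀ i, ‖v i‖ ≤ L i * D) :
    ∑ i, L i / (∑ j, L j) * ‖(L i / ∑ j, L j)⁻¹ • v i‖ ^ 2 ≤ (∑ j, L j) ^ 2 * D ^ 2 := by
  set Λ := ∑ j, L j
  have hterm : ∀ i, L i / Λ * ‖(L i / Λ)⁻¹ • v i‖ ^ 2 ≤ Λ * L i * D ^ 2 := by
    intro i
    have hΛ : 0 < Λ := (hL i).trans_le
      (Finset.single_le_sum (fun j _ ↦ (hL j).le) (Finset.mem_univ i))
    have hv2 : ‖v i‖ ^ 2 ≤ (L i * D) ^ 2 := pow_le_pow_left₀ (norm_nonneg _) (hv i) 2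
    rw [norm_smul, Real.norm_of_nonneg (inv_nonneg.2 (div_pos (hL i) hΛ).le)]
    calc L i / Λ * ((L i / Λ)⁻¹ * ‖v i‖) ^ 2 = Λ / L i * ‖v i‖ ^ 2 := by
          field_simp
      _ ≤ Λ / L i * (L i * D) ^ 2 := mul_le_mul_of_nonneg_left hv2 (div_pos hΛ (hL i)).le
      _ = Λ * L i * D ^ 2 := by field_simp [(hL i).ne']
  calc ∑ i, L i / Λ * ‖(L i / Λ)⁻¹ • v i‖ ^ 2 ≤ ∑ i, Λ * L i * D ^ 2 :=
        Finset.sum_le_sum fun i _ ↦ hterm i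
    _ = Λ ^ 2 * D ^ 2 := by rw [← Finset.sum_mul, ← Finset.mul_sum]; ring

theorem sum_mul_norm_sub_sq_eq {ι E : Type*} [Fintype ι] [NormedAddCommGroup E]
    [InnerProductSpace ℝ E] {p : ι → ℝ} (hp : ∑ i, p i = 1) {c : ι → E} {m : E}
    (hm : ∑ i, p i • c i = m) :
    ∑ i, p i * ‖c i - m‖ ^ 2 = ∑ i, p i * ‖c i‖ ^ 2 - ‖m‖ ^ 2 := by
  have hcross : ∑ i, p i * inner ℝ (c i) m = ‖m‖ ^ 2 := by
    simp only [← real_inner_smul_left, ← sum_inner, hm, real_inner_self_eq_norm_sq]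
  calc ∑ i, p i * ‖c i - m‖ ^ 2
      = ∑ i, p i * ‖c i‖ ^ 2 - 2 * ∑ i, p i * inner ℝ (c i) m + (∑ i, p i) * ‖m‖ ^ 2 := by
        simp only [norm_sub_sq_real, Finset.mul_sum, Finset.sum_mul, ← Finset.sum_sub_distrib,
          ← Finset.sum_add_distrib]
        exact Finset.sum_congr rfl fun i _ ↦ by ring
    _ = ∑ i, p i * ‖c i‖ ^ 2 - ‖m‖ ^ 2 := by
        rw [hcross, hp]; ring

theorem inv_natCast_smul_sum_sub {E : Type*} [AddCommGroup E] [Module ℝ E] {n : ℕ} (hn : n ≠ 0)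
    (x : Fin n → E) (m : E) : (n : ℝ)⁻¹ • ∑ k, (x k - m) = (n : ℝ)⁻¹ • ∑ k, x k - m := by
  rw [Finset.sum_sub_distrib, Finset.sum_const, Finset.card_univ, Fintype.card_fin, smul_sub,
    ← Nat.cast_smul_eq_nsmul ℝ, smul_smul, inv_mul_cancel₀ (Nat.cast_ne_zero.2 hn), one_smul]

namespace ProbabilityTheory

variable {Ω ι κ E : Type*} [MeasurableSpace Ω] {μ : Measure Ω} [IsFiniteMeasure μ]
  [Fintype ι] [MeasurableSpace ι] [MeasurableSingletonClass ι] [Fintype κ]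

theorem integral_comp_eq_sum_measureReal_preimage [NormedAddCommGroup E] [NormedSpace ℝ E]
    [CompleteSpace E] {X : Ω → ι} (hX : Measurable X) (h : ι → E) :
    ∫ ω, h (X ω) ∂μ = ∑ i, μ.real (X ⁻¹' {i}) • h i := by
  rw [← integral_map hX.aemeasurable .of_discrete, integral_fintype .of_finite]
  simp only [map_measureReal_apply hX (measurableSet_singleton _)]

variable [NormedAddCommGroup E] [InnerProductSpace ℝ E]

theorem IndepFun.integral_inner_comp [MeasurableSpace κ] [MeasurableSingletonClass κ]
    {X : Ω → ι} {Y : Ω → κ} (hXY : IndepFun X Y μ) (hX : Measurable X) (hY : Measurable Y)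
    (F : ι → E) (G : κ → E) :
    ∫ ω, inner ℝ (F (X ω)) (G (Y ω)) ∂μ
      = inner ℝ (∑ i, μ.real (X ⁻¹' {i}) • F i) (∑ j, μ.real (Y ⁻¹' {j}) • G j) := by
  have hjoint : ∀ i j, μ.real ((fun ω ↦ (X ω, Y ω)) ⁻¹' {(i, j)})
      = μ.real (X ⁻¹' {i}) * μ.real (Y ⁻¹' {j}) := by
    intro i j
    have hpre : (fun ω ↦ (X ω, Y ω)) ⁻¹' {(i, j)} = X ⁻¹' {i} ∩ Y ⁻¹' {j} := by
      ext ω; simp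
    rw [hpre, measureReal_def, hXY.measure_inter_preimage_eq_mul _ _ (measurableSet_singleton i)
      (measurableSet_singleton j), ENNReal.toReal_mul, measureReal_def, measureReal_def]
  rw [integral_comp_eq_sum_measureReal_preimage (hX.prodMk hY)
    (fun ij ↦ inner ℝ (F ij.1) (G ij.2)), Fintype.sum_prod_type, sum_inner]
  refine Finset.sum_congr rfl fun i _ ↦ ?_
  rw [inner_sum]
  refine Finset.sum_congr rfl fun j _ ↦ ?_
  rw [hjoint, real_inner_smul_left, real_inner_smul_right, smul_eq_mul]
  ring

theorem iIndepFun.integral_norm_sum_sq {S : κ → Ω → ι} (hS : ∀ k, Measurable (S k))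
    (hind : iIndepFun S μ) {p : ι → ℝ} (hlaw : ∀ k i, μ.real (S k ⁻¹' {i}) = p i)
    {F : ι → E} (hF : ∑ i, p i • F i = 0) :
    ∫ ω, ‖∑ k, F (S k ω)‖ ^ 2 ∂μ = Fintype.card κ * ∑ i, p i * ‖F i‖ ^ 2 := by
  have hint : ∀ k j, Integrable (fun ω ↦ inner ℝ (F (S k ω)) (F (S j ω))) μ := fun k j ↦
    (Integrable.of_finite (f := fun ij : ι × ι ↦ inner ℝ (F ij.1) (F ij.2))).comp_measurable
      ((hS k).prodMk (hS j))
  have hdiag : ∀ k, ∫ ω, inner ℝ (F (S k ω)) (F (S k ω)) ∂μ = ∑ i, p i * ‖F i‖ ^ 2 := by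
    intro k
    simp only [real_inner_self_eq_norm_sq]
    rw [integral_comp_eq_sum_measureReal_preimage (hS k) (fun i ↦ ‖F i‖ ^ 2)]
    simp only [hlaw, smul_eq_mul]
  have hoff : ∀ k j, j ≠ k → ∫ ω, inner ℝ (F (S j ω)) (F (S k ω)) ∂μ = 0 := by
    intro k j hjk
    rw [(hind.indepFun hjk).integral_inner_comp (hS j) (hS k)]
    simp only [hlaw, hF, inner_zero_left]
  calc ∫ ω, ‖∑ k, F (S k ω)‖ ^ 2 ∂μ
      = ∫ ω, ∑ k, ∑ j, inner ℝ (F (S j ω)) (F (S k ω)) ∂μ := by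
        simp only [← real_inner_self_eq_norm_sq, sum_inner, inner_sum]
    _ = ∑ k, ∑ j, ∫ ω, inner ℝ (F (S j ω)) (F (S k ω)) ∂μ := by
        rw [integral_finsetSum _ fun k _ ↦ integrable_finsetSum _ fun j _ ↦ hint j k]
        exact Finset.sum_congr rfl fun k _ ↦ integral_finsetSum _ fun j _ ↦ hint j k
    _ = ∑ _k : κ, ∑ i, p i * ‖F i‖ ^ 2 := by
        refine Finset.sum_congr rfl fun k _ ↦ ?_
        rw [Finset.sum_eq_single_of_mem k (Finset.mem_univ k) fun j _ hjk ↦ hoff k j hjk]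
        exact hdiag k
    _ = Fintype.card κ * ∑ i, p i * ‖F i‖ ^ 2 := by
        rw [Finset.sum_const, Finset.card_univ, nsmul_eq_mul]

end ProbabilityTheory

theorem stmt2_general (d N n : ℕ) (hN : 0 < N) (hn : 0 < n)
    (L : Fin N → ℝ) (hL : ∀ i, 0 < L i)
    (g0 : EuclideanSpace ℝ (Fin d) → EuclideanSpace ℝ (Fin d))
    (g : Fin N → EuclideanSpace ℝ (Fin d) → EuclideanSpace ℝ (Fin d))
    (hlip : ∀ i, ∀ θ θ' : EuclideanSpace ℝ (Fin d),
      ‖g i θ - g i θ'‖ ≤ L i * ‖θ - θ'‖)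
    (θ θhat : EuclideanSpace ℝ (Fin d))
    {Ω : Type*} [MeasurableSpace Ω] (μ : Measure Ω) [IsProbabilityMeasure μ]
    (S : Fin n → Ω → Fin N) (hSm : ∀ k, Measurable (S k))
    (hlaw : ∀ k, ∀ i, μ {ω | S k ω = i} = ENNReal.ofReal (L i / ∑ j, L j))
    (hindep : iIndepFun S μ) :
    ∫ ω, ‖(g0 θ - g0 θhat
        + (n : ℝ)⁻¹ • ∑ k : Fin n,
            (L (S k ω) / ∑ j, L j)⁻¹ • (g (S k ω) θ - g (S k ω) θhat))
      - ((g0 θ + ∑ i : Fin N, g i θ) - (g0 θhat + ∑ i : Fin N, g i θhat))‖ ^ 2 ∂μ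
      ≤ (∑ i : Fin N, L i) ^ 2 / n * ‖θ - θhat‖ ^ 2 := by
  set Λ := ∑ j, L j
  have hΛ : 0 < Λ := Finset.sum_pos (fun i _ ↦ hL i) ⟨⟨0, hN⟩, Finset.mem_univ _⟩
  set p : Fin N → ℝ := fun i ↦ L i / Λ
  have hp_pos : ∀ i, 0 < p i := fun i ↦ div_pos (hL i) hΛ
  have hp : ∑ i, p i = 1 := by rw [← Finset.sum_div, div_self hΛ.ne']
  have hlaw_real : ∀ k i, μ.real (S k ⁻¹' {i}) = p i := fun k i ↦ by
    rw [measureReal_def, show S k ⁻¹' {i} = {ω | S k ω = i} from rfl, hlaw,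
      ENNReal.toReal_ofReal (hp_pos i).le]
  set c := fun i ↦ (p i)⁻¹ • (g i θ - g i θhat)
  have hc : ∀ i, (L i / Λ)⁻¹ • (g i θ - g i θhat) = c i := fun _ ↦ rfl
  set m := ∑ i, p i • c i with hm_def
  have hm : m = ∑ i, g i θ - ∑ i, g i θhat := by
    simp only [m, c, smul_smul, mul_inv_cancel₀ (hp_pos _).ne', one_smul, Finset.sum_sub_distrib]
  have hcentered : ∑ i, p i • (c i - m) = 0 := by
    simp only [smul_sub, Finset.sum_sub_distrib, ← Finset.sum_smul, hp, one_smul, m, sub_self]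
  have hnoise : ∀ ω, (g0 θ - g0 θhat + (n : ℝ)⁻¹ • ∑ k, c (S k ω))
      - ((g0 θ + ∑ i, g i θ) - (g0 θhat + ∑ i, g i θhat))
      = (n : ℝ)⁻¹ • ∑ k, (c (S k ω) - m) := fun ω ↦ by
    rw [inv_natCast_smul_sum_sub hn.ne', hm]
    abel
  calc _ = ∫ ω, ((n : ℝ)⁻¹) ^ 2 * ‖∑ k, (c (S k ω) - m)‖ ^ 2 ∂μ := by
        simp only [hc, hnoise, norm_smul, mul_pow,
          Real.norm_of_nonneg (inv_nonneg.2 n.cast_nonneg)]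
    _ = (n : ℝ)⁻¹ * (∑ i, p i * ‖c i‖ ^ 2 - ‖m‖ ^ 2) := by
        rw [integral_const_mul, hindep.integral_norm_sum_sq hSm hlaw_real hcentered,
          Fintype.card_fin, sum_mul_norm_sub_sq_eq hp hm_def.symm]
        field_simp
    _ ≤ (n : ℝ)⁻¹ * (Λ ^ 2 * ‖θ - θhat‖ ^ 2) := by
        gcongr
        linarith [sq_nonneg ‖m‖, sum_mul_norm_inv_smul_sq_le hL fun i ↦ hlip i θ θhat]
    _ = Λ ^ 2 / n * ‖θ - θhat‖ ^ 2 := by ring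

/-- Variance bound for the control-variate gradient estimate with importance
probabilities pᵢ = Lᵢ/Σⱼ Lⱼ: E‖ξ‖² ≤ (Σᵢ Lᵢ)²/n · ‖θ - θ̂‖². -/
theorem stmt2 (d N n : ℕ) (hN : 0 < N) (hn : 0 < n)
    (L : Fin N → ℝ) (hL : ∀ i, 0 < L i)
    (g0 : EuclideanSpace ℝ (Fin d) → EuclideanSpace ℝ (Fin d))
    (g : Fin N → EuclideanSpace ℝ (Fin d) → EuclideanSpace ℝ (Fin d))
    (L0 : ℝ) (hL0 : 0 < L0)
    (hlip0 : ∀ θ θ' : EuclideanSpace ℝ (Fin d), ‖g0 θ - g0 θ'‖ ≤ L0 * ‖θ - θ'‖)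
    (hlip : ∀ i, ∀ θ θ' : EuclideanSpace ℝ (Fin d),
      ‖g i θ - g i θ'‖ ≤ L i * ‖θ - θ'‖)
    (θ θhat : EuclideanSpace ℝ (Fin d))
    {Ω : Type*} [MeasurableSpace Ω] (μ : Measure Ω) [IsProbabilityMeasure μ]
    (S : Fin n → Ω → Fin N) (hSm : ∀ k, Measurable (S k))
    (hlaw : ∀ k, ∀ i, μ {ω | S k ω = i} = ENNReal.ofReal (L i / ∑ j, L j))
    (hindep : iIndepFun S μ) :
    ∫ ω, ‖(g0 θ - g0 θhat
        + (n : ℝ)⁻¹ • ∑ k : Fin n,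
            (L (S k ω) / ∑ j, L j)⁻¹ • (g (S k ω) θ - g (S k ω) θhat))
      - ((g0 θ + ∑ i : Fin N, g i θ) - (g0 θhat + ∑ i : Fin N, g i θhat))‖ ^ 2 ∂μ
      ≤ (∑ i : Fin N, L i) ^ 2 / n * ‖θ - θhat‖ ^ 2 :=
  stmt2_general d N n hN hn L hL g0 g hlip θ θhat μ S hSm hlaw hindep
end

section
/- For h < 2m/(2M² + m²) with 0 < m ≤ M and n ≥ 1, the quantity A = 1 - √(2h²M²/n + (1 - mh)²) lies in the interval (0, 1). -/
open Real Set

theorem one_sub_sqrt_mem_Ioo {q : ℝ} (hq₀ : 0 < q) (hq₁ : q < 1) : 1 - √q ∈ Ioo (0 : ℝ) 1 := by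
  have hlt : √q < 1 := (sqrt_lt' one_pos).2 (by rwa [one_pow])
  have hpos : 0 < √q := sqrt_pos.2 hq₀
  constructor <;> linarith

theorem sq_mul_add_one_sub_mul_sq_lt_one {a b h : ℝ} (hh : 0 < h) (hab : h * (a + b ^ 2) < 2 * b) :
    h ^ 2 * a + (1 - b * h) ^ 2 < 1 := by
  have hgap : 0 < h * (2 * b - h * (a + b ^ 2)) := mul_pos hh (sub_pos.2 hab)
  calc h ^ 2 * a + (1 - b * h) ^ 2 = 1 - h * (2 * b - h * (a + b ^ 2)) := by ring
    _ < 1 := sub_lt_self 1 hgap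

/-- For h < 2m/(2M² + m²) the constant A = 1 - √(2h²M²/n + (1-mh)²) lies in (0,1). -/
theorem stmt5 (m M h : ℝ) (n : ℕ) (hm : 0 < m) (hmM : m ≤ M) (hn : 1 ≤ n)
    (hh : 0 < h) (hh2 : h < 2 * m / (2 * M ^ 2 + m ^ 2)) :
    1 - Real.sqrt (2 * h ^ 2 * M ^ 2 / n + (1 - m * h) ^ 2) ∈ Set.Ioo (0 : ℝ) 1 := by
  have hM : 0 < M := hm.trans_le hmM
  have hn' : (1 : ℝ) ≤ n := by exact_mod_cast hn
  have hstep : h * (2 * M ^ 2 + m ^ 2) < 2 * m := (lt_div_iff₀ (by positivity)).1 hh2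
  apply one_sub_sqrt_mem_Ioo
  · have : (0 : ℝ) < n := zero_lt_one.trans_le hn'
    positivity
  · calc 2 * h ^ 2 * M ^ 2 / n + (1 - m * h) ^ 2 ≤ h ^ 2 * (2 * M ^ 2) + (1 - m * h) ^ 2 := by
          gcongr
          rw [← mul_assoc, mul_comm (h ^ 2) 2]
          exact div_le_self (by positivity) hn'
      _ < 1 := sq_mul_add_one_sub_mul_sq_lt_one hh hstep
end
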